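/- Let d ≥ 2, let C be a d-copula, let u ∈ [0,1]^d, and let π ∈ S_d. Writing u_{(1)} := min{u_1,…,u_d}, one has |C(u) − C(u_π)| ≤ min{ u_1, …, u_d, Σ_{i=1}^d (u_i − u_{(1)}), (d−1) + u_{(1)} − Σ_{i=1}^d u_i }. -/

import Mathlib

/-!
Both `C u` and `C (u ∘ π)` lie in three intervals whose lengths are the three terms of the
minimum, where `m = u₍₁₎`: `[0, m]`, since a copula is nonnegative and below every coordinate;
`[∑ uᵢ - (d - 1), m]`, by the lower Fréchet bound and the permutation invariance of `∑ uᵢ`; and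
`[C (m,…,m), C (m,…,m) + ∑ (uᵢ - m)]`, since `C` is monotone and `x ↦ ∑ xᵢ - C x` is monotone.

Both monotonicity statements reduce to one coordinate at a time. If the lower corner of a box
is `0` outside a set `S` of coordinates, groundedness kills every vertex term with a coordinate
outside `S` at `0`, so the volume of the box is an `|S|`-dimensional volume with the other
coordinates frozen. For `|S| = 1` this makes `C` increasing in each coordinate; for `|S| = 2`
it makes an increment of `C` in coordinate `j` increasing in every other coordinate, so raising
those to `1` and using the uniform margins bounds the increment by the change in coordinate `j`.
-/

/-- A `d`-copula: a function `C : [0,1]^d → ℝ` (defined on all of `(Fin d → ℝ)`,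
with the copula conditions imposed on `[0,1]^d`) that is grounded, has uniform
one-dimensional margins, and is `d`-increasing. -/
def IsCopula (d : ℕ) (C : (Fin d → ℝ) → ℝ) : Prop :=
  (∀ u : Fin d → ℝ, (∀ i, u i ∈ Set.Icc (0:ℝ) 1) → (∃ i, u i = 0) → C u = 0) ∧
  (∀ u : Fin d → ℝ, (∀ i, u i ∈ Set.Icc (0:ℝ) 1) →
    ∀ i : Fin d, (∀ j, j ≠ i → u j = 1) → C u = u i) ∧
  (∀ a b : Fin d → ℝ, (∀ i, a i ∈ Set.Icc (0:ℝ) 1) → (∀ i, b i ∈ Set.Icc (0:ℝ) 1) →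
    (∀ i, a i ≤ b i) →
    0 ≤ ∑ S : Finset (Fin d),
        (-1 : ℝ) ^ (d - S.card) * C (fun k => if k ∈ S then b k else a k))

open Finset Function

theorem monotoneOn_Icc_of_le_update {ι α β : Type*} [Fintype ι] [DecidableEq ι] [Preorder α]
    [Preorder β] {a b : ι → α} {f : (ι → α) → β}
    (hf : ∀ z ∈ Set.Icc a b, ∀ j t, z j ≤ t → t ≤ b j → f z ≤ f (update z j t)) :
    MonotoneOn f (Set.Icc a b) := by
  intro x hx y hy hxy
  suffices h : ∀ s : Finset ι, f x ≤ f (s.piecewise y x) by simpa using h univ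
  intro s
  induction s using Finset.induction_on with
  | empty => simp
  | insert j s hj ih =>
    refine ih.trans ?_
    rw [piecewise_insert]
    apply hf _ (piecewise_mem_Icc_of_mem_of_mem _ hy hx)
    · simpa [hj] using hxy j
    · exact hy.2 j

theorem Pi.mem_Icc_zero_one_iff {ι : Type*} {x : ι → ℝ} :
    x ∈ Set.Icc 0 1 ↔ ∀ i, x i ∈ Set.Icc (0 : ℝ) 1 := by
  simp [Set.mem_Icc, Pi.le_def, forall_and]

theorem Function.update_mem_Icc {ι α : Type*} [DecidableEq ι] [Preorder α] {a b x : ι → α}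
    (hx : x ∈ Set.Icc a b) (j : ι) {t : α} (ht : t ∈ Set.Icc (a j) (b j)) :
    update x j t ∈ Set.Icc a b :=
  ⟨le_update_iff.2 ⟨ht.1, fun k _ => hx.1 k⟩, update_le_iff.2 ⟨ht.2, fun k _ => hx.2 k⟩⟩

namespace IsCopula

variable {d : ℕ} {C : (Fin d → ℝ) → ℝ}

theorem sectionVolume_nonneg (hC : IsCopula d C) (S : Finset (Fin d)) {a b : Fin d → ℝ}
    (ha : a ∈ Set.Icc 0 1) (hb : b ∈ Set.Icc 0 1) (hab : a ≤ b) :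
    0 ≤ ∑ U ∈ S.powerset, (-1 : ℝ) ^ #U * C (U.piecewise a b) := by
  set a' := S.piecewise a 0
  have ha' : a' ∈ Set.Icc 0 1 :=
    piecewise_mem_Icc_of_mem_of_mem _ ha (Set.left_mem_Icc.2 zero_le_one)
  have hvol := hC.2.2 a' b (Pi.mem_Icc_zero_one_iff.1 ha') (Pi.mem_Icc_zero_one_iff.1 hb)
    (piecewise_le_of_le_of_le _ hab hb.1)
  set f : Finset (Fin d) → ℝ := fun T => (-1 : ℝ) ^ (d - #T) * C (T.piecewise b a')
  have hvanish : ∀ T, f T ≠ 0 → Sᶜ ⊆ T := by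
    intro T hT k hk
    by_contra hkT
    refine hT (mul_eq_zero_of_right _ (hC.1 _ ?_ ⟨k, ?_⟩))
    · exact Pi.mem_Icc_zero_one_iff.1 (piecewise_mem_Icc_of_mem_of_mem _ hb ha')
    · simp_all [a']
  calc ∑ U ∈ S.powerset, (-1 : ℝ) ^ #U * C (U.piecewise a b)
      = ∑ U ∈ S.powerset, f Uᶜ := by
        refine sum_congr rfl fun U hU => ?_
        have hUS : U ⊆ S := mem_powerset.1 hU
        have hvertex : U.piecewise a b = Uᶜ.piecewise b a' := by
          ext k
          by_cases hk : k ∈ U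
          · simp [a', piecewise, hk, hUS hk]
          · simp [a', piecewise, hk]
        have hcard : d - #Uᶜ = #U := by
          rw [card_compl, Fintype.card_fin, Nat.sub_sub_self (by simpa using card_le_univ U)]
        simp only [f, hvertex, hcard]
    _ = ∑ T with Sᶜ ⊆ T, f T :=
        sum_nbij' compl compl (by simp)
          (fun T hT => by simpa using compl_subset_compl.2 (mem_filter.1 hT).2)
          (fun _ _ => compl_compl _) (fun _ _ => compl_compl _) fun _ _ => rfl
    _ = ∑ T, f T := sum_filter_of_ne fun T _ => hvanish T
    _ ≥ 0 := hvol

theorem apply_update_le (hC : IsCopula d C) {b : Fin d → ℝ} (hb : b ∈ Set.Icc 0 1) (j : Fin d)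
    {t : ℝ} (ht : 0 ≤ t) (htb : t ≤ b j) : C (update b j t) ≤ C b := by
  have ha : update b j t ∈ Set.Icc 0 1 :=
    update_mem_Icc hb j ⟨ht, htb.trans (hb.2 j)⟩
  have h := hC.sectionVolume_nonneg {j} ha hb (update_le_iff.2 ⟨htb, fun k _ => le_rfl⟩)
  rw [← insert_empty_eq, sum_powerset_insert (notMem_empty j), powerset_empty] at h
  simp only [sum_singleton, card_empty, pow_zero, one_mul, piecewise_empty, piecewise_insert,
    card_insert_of_notMem (notMem_empty j), pow_one, neg_one_mul, update_self, zero_add] at h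
  linarith

theorem apply_update_add_apply_update_le (hC : IsCopula d C) {b : Fin d → ℝ}
    (hb : b ∈ Set.Icc 0 1) {i j : Fin d} (hij : i ≠ j) {s t : ℝ} (hs : 0 ≤ s) (hsb : s ≤ b i)
    (ht : 0 ≤ t) (htb : t ≤ b j) :
    C (update b i s) + C (update b j t) ≤ C b + C (update (update b j t) i s) := by
  have ha : update (update b j t) i s ∈ Set.Icc 0 1 :=
    update_mem_Icc (update_mem_Icc hb j ⟨ht, htb.trans (hb.2 j)⟩) i
      ⟨hs, hsb.trans (hb.2 i)⟩
  have hab : update (update b j t) i s ≤ b := by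
    intro k
    by_cases hki : k = i
    · subst hki; simpa using hsb
    · by_cases hkj : k = j
      · subst hkj; simpa [hki] using htb
      · simp [hki, hkj]
  have h := hC.sectionVolume_nonneg {i, j} ha hb hab
  rw [sum_powerset_insert (by simpa using hij), ← insert_empty_eq,
    sum_powerset_insert (notMem_empty j), sum_powerset_insert (notMem_empty j)] at h
  simp [piecewise_insert, hij, hij.symm] at h
  linarith

theorem apply_update_one (hC : IsCopula d C) (j : Fin d) {t : ℝ} (ht : t ∈ Set.Icc (0 : ℝ) 1) :
    C (update 1 j t) = t := by
  have h1 : update (1 : Fin d → ℝ) j t ∈ Set.Icc 0 1 :=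
    update_mem_Icc (Set.right_mem_Icc.2 zero_le_one) j ht
  simpa using hC.2.1 _ (Pi.mem_Icc_zero_one_iff.1 h1) j fun k hk => by simp [hk]

theorem sub_apply_update_le (hC : IsCopula d C) {b : Fin d → ℝ} (hb : b ∈ Set.Icc 0 1)
    (j : Fin d) {t : ℝ} (ht : 0 ≤ t) (htb : t ≤ b j) : C b - C (update b j t) ≤ b j - t := by
  set Δ : (Fin d → ℝ) → ℝ := fun x => C (update x j (b j)) - C (update x j t)
  have hΔ : MonotoneOn Δ (Set.Icc 0 1) := by
    refine monotoneOn_Icc_of_le_update fun z hz k r hzr hr => ?_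
    by_cases hkj : k = j
    · subst hkj; simp [Δ]
    · have hb' : update (update z k r) j (b j) ∈ Set.Icc 0 1 :=
        update_mem_Icc (update_mem_Icc hz k ⟨(hz.1 k).trans hzr, hr⟩) j
          (Pi.mem_Icc_zero_one_iff.1 hb j)
      have h := hC.apply_update_add_apply_update_le hb' (Ne.symm hkj) ht (by simpa using htb)
        (hz.1 k) (by simpa [hkj] using hzr)
      have hzk : ∀ x, update (update z j x) k (z k) = update z j x := fun x => by
        conv_lhs => rw [← update_of_ne hkj x z]
        exact update_eq_self k _
      simp only [update_idem, update_comm hkj, hzk] at h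
      simp only [Δ, update_comm hkj]
      linarith
  have h := hΔ hb (Set.right_mem_Icc.2 zero_le_one) hb.2
  simp only [Δ, update_eq_self, hC.apply_update_one j (Pi.mem_Icc_zero_one_iff.1 hb j),
    hC.apply_update_one j ⟨ht, htb.trans (hb.2 j)⟩] at h
  linarith

theorem monotoneOn (hC : IsCopula d C) : MonotoneOn C (Set.Icc 0 1) :=
  monotoneOn_Icc_of_le_update fun z hz j t hzt ht => by
    simpa using hC.apply_update_le (update_mem_Icc hz j ⟨(hz.1 j).trans hzt, ht⟩) j
      (hz.1 j) (by simpa using hzt)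

theorem monotoneOn_sum_sub (hC : IsCopula d C) :
    MonotoneOn (fun x => ∑ i, x i - C x) (Set.Icc 0 1) :=
  monotoneOn_Icc_of_le_update fun z hz j t hzt ht => by
    have h := hC.sub_apply_update_le (update_mem_Icc hz j ⟨(hz.1 j).trans hzt, ht⟩)
      j (hz.1 j) (by simpa using hzt)
    have hsum : ∑ i, update z j t i = ∑ i, z i + (t - z j) := by
      rw [sum_update_of_mem (mem_univ j), sum_eq_add_sum_sdiff_singleton_of_mem (mem_univ j)]
      ring
    simp only [update_self, update_idem, update_eq_self] at h
    simp only [hsum]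
    linarith

theorem sub_le_sum_sub (hC : IsCopula d C) {x y : Fin d → ℝ} (hx : x ∈ Set.Icc 0 1)
    (hy : y ∈ Set.Icc 0 1) (hxy : x ≤ y) : C y - C x ≤ ∑ i, (y i - x i) := by
  have h := hC.monotoneOn_sum_sub hx hy hxy
  simp only [sum_sub_distrib] at h ⊢
  linarith

theorem le_apply (hC : IsCopula d C) {x : Fin d → ℝ} (hx : x ∈ Set.Icc 0 1) (i : Fin d) :
    C x ≤ x i := by
  have h := hC.monotoneOn hx
    (update_mem_Icc (Set.right_mem_Icc.2 zero_le_one) i ⟨hx.1 i, hx.2 i⟩)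
    (le_update_iff.2 ⟨le_rfl, fun k _ => hx.2 k⟩)
  rwa [hC.apply_update_one i (Pi.mem_Icc_zero_one_iff.1 hx i)] at h

variable [NeZero d]

theorem apply_one (hC : IsCopula d C) : C 1 = 1 := by
  simpa using hC.apply_update_one 0 (Set.right_mem_Icc.2 zero_le_one)

theorem nonneg (hC : IsCopula d C) {x : Fin d → ℝ} (hx : x ∈ Set.Icc 0 1) : 0 ≤ C x := by
  have h0 : C 0 = 0 :=
    hC.1 0 (Pi.mem_Icc_zero_one_iff.1 (Set.left_mem_Icc.2 zero_le_one)) ⟨0, rfl⟩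
  exact h0 ▸ hC.monotoneOn (Set.left_mem_Icc.2 zero_le_one) hx hx.1

theorem sum_sub_le (hC : IsCopula d C) {x : Fin d → ℝ} (hx : x ∈ Set.Icc 0 1) :
    ∑ i, x i - (d - 1) ≤ C x := by
  have h := hC.monotoneOn_sum_sub hx (Set.right_mem_Icc.2 zero_le_one) hx.2
  simp only [Pi.one_apply, sum_const, card_univ, Fintype.card_fin, nsmul_eq_mul, mul_one,
    hC.apply_one] at h
  linarith

end IsCopula

theorem refined_bound (d : ℕ) (hd : 2 ≤ d)
    (C : (Fin d → ℝ) → ℝ) (hC : IsCopula d C)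
    (u : Fin d → ℝ) (hu : ∀ i, u i ∈ Set.Icc (0:ℝ) 1)
    (π : Equiv.Perm (Fin d)) :
    |C u - C (u ∘ π)| ≤
      min (Finset.univ.inf' ⟨⟨0, by omega⟩, Finset.mem_univ _⟩ u)
        (min (∑ i, (u i - Finset.univ.inf' ⟨⟨0, by omega⟩, Finset.mem_univ _⟩ u))
          (((d : ℝ) - 1) + Finset.univ.inf' ⟨⟨0, by omega⟩, Finset.mem_univ _⟩ u
            - ∑ i, u i)) := by
  have : NeZero d := ⟨by omega⟩
  set m := univ.inf' _ u
  obtain ⟨i₀, -, hi₀⟩ : ∃ i ∈ univ, m = u i := exists_mem_eq_inf' _ u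
  have hu₁ : u ∈ Set.Icc 0 1 := Pi.mem_Icc_zero_one_iff.2 hu
  have hπ₁ : u ∘ π ∈ Set.Icc 0 1 := Pi.mem_Icc_zero_one_iff.2 fun i => hu (π i)
  have hm₁ : (fun _ => m) ∈ Set.Icc (0 : Fin d → ℝ) 1 :=
    Pi.mem_Icc_zero_one_iff.2 fun _ => hi₀ ▸ hu i₀
  have hmu : (fun _ => m) ≤ u := fun i => inf'_le u (mem_univ i)
  have hmπ : (fun _ => m) ≤ u ∘ π := fun i => hmu (π i)
  have hCu : C u ≤ m := hi₀ ▸ hC.le_apply hu₁ i₀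
  have hCπ : C (u ∘ π) ≤ m := by simpa [hi₀] using hC.le_apply hπ₁ (π.symm i₀)
  have hsum : ∑ i, (u ∘ π) i = ∑ i, u i := Equiv.sum_comp π u
  have hsum_sub : ∑ i, ((u ∘ π) i - m) = ∑ i, (u i - m) := Equiv.sum_comp π (u · - m)
  refine le_min ?_ (le_min ?_ ?_)
  · simpa using abs_sub_le_of_le_of_le (hC.nonneg hu₁) hCu (hC.nonneg hπ₁) hCπ
  · have hlipu := hC.sub_le_sum_sub hm₁ hu₁ hmu
    have hlipπ := hsum_sub ▸ hC.sub_le_sum_sub hm₁ hπ₁ hmπ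
    have := abs_sub_le_of_le_of_le (hC.monotoneOn hm₁ hu₁ hmu) (sub_le_iff_le_add'.1 hlipu)
      (hC.monotoneOn hm₁ hπ₁ hmπ) (sub_le_iff_le_add'.1 hlipπ)
    linarith
  · have := abs_sub_le_of_le_of_le (hC.sum_sub_le hu₁) hCu (hsum ▸ hC.sum_sub_le hπ₁) hCπ
    linarith
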